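/- arXiv:2204.11213 — 8 statements merged into one kernel-verified Lean document; each statement's English description precedes it below -/
import Mathlib

section
/- If A and B are nonempty words and the powers A^{m1} and B^{m2} share a common prefix of length at least |A| + |B|, then there exists a word C and integers k, l such that A = C^k and B = C^l. -/
/-!
Let `W` be the common prefix of length `|A| + |B|`. Since `A^m` is a prefix of `A^(m+1) = A A^m` and
`B` is a prefix of `W`, hence of `A^m`, both `W` and `A B` are prefixes of `A^(m+1)` of the same
length, so `W = A B`; symmetrically `W = B A`. Commuting words are powers of a common word, by
Euclid's algorithm on the lengths: if `|A| ≤ |B|` then `B = A B'` with `A B' = B' A`.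
-/

/-- `wpow A n` is the `n`-fold concatenation `A^n` of the word `A`. -/
def wpow {α : Type*} (A : List α) : ℕ → List α
  | 0 => []
  | n + 1 => A ++ wpow A n

namespace List

variable {α : Type*}

lemma wpow_add (A : List α) (m n : ℕ) : wpow A (m + n) = wpow A m ++ wpow A n := by
  induction m with
  | zero => simp [wpow]
  | succ m ih => simp [wpow, Nat.succ_add, ih]

lemma wpow_succ' (A : List α) (n : ℕ) : wpow A (n + 1) = wpow A n ++ A := by
  rw [wpow_add A n 1, wpow, wpow, append_nil]

lemma wpow_prefix_wpow_succ (A : List α) (n : ℕ) : wpow A n <+: wpow A (n + 1) := by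
  rw [wpow_succ']
  exact prefix_append _ _

lemma prefix_take_wpow {A : List α} {m n : ℕ} (hA : A.length ≤ n) (hn : n ≤ (wpow A m).length) :
    A <+: (wpow A m).take n := by
  refine prefix_take_iff.mpr ⟨?_, hA⟩
  cases m with
  | zero => simp_all [wpow]
  | succ m => exact prefix_append _ _

lemma take_wpow_eq_append_of_prefix {A B : List α} {m : ℕ}
    (hlen : A.length + B.length ≤ (wpow A m).length) (hB : B <+: wpow A m) :
    (wpow A m).take (A.length + B.length) = A ++ B := by
  have hW : (wpow A m).take (A.length + B.length) <+: wpow A (m + 1) :=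
    (take_prefix _ _).trans (wpow_prefix_wpow_succ A m)
  have hAB : A ++ B <+: wpow A (m + 1) := (prefix_append_right_inj A).mpr hB
  refine (prefix_of_prefix_length_le hW hAB ?_).eq_of_length ?_ <;> simp [hlen]

lemma exists_eq_append_of_append_comm {A B : List α} (h : A ++ B = B ++ A)
    (hle : A.length ≤ B.length) : ∃ B', B = A ++ B' ∧ A ++ B' = B' ++ A := by
  have hAB : A <+: B := prefix_of_prefix_length_le (h ▸ prefix_append A B) (prefix_append B A) hle
  obtain ⟨B', rfl⟩ := hAB
  refine ⟨B', rfl, append_cancel_left (as := A) ?_⟩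
  simpa using h

theorem exists_eq_wpow_of_append_comm {A B : List α} (h : A ++ B = B ++ A) :
    ∃ (C : List α) (k l : ℕ), A = wpow C k ∧ B = wpow C l := by
  induction hn : A.length + B.length using Nat.strong_induction_on generalizing A B with
  | _ n ih =>
  rcases eq_or_ne A [] with rfl | hA
  · exact ⟨B, 0, 1, rfl, by simp [wpow]⟩
  rcases le_total A.length B.length with hle | hle
  · obtain ⟨B', rfl, h'⟩ := exists_eq_append_of_append_comm h hle
    have hlt : A.length + B'.length < n := by
      have := length_pos_iff.mpr hA
      simp only [length_append] at hn; omega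
    obtain ⟨C, k, l, rfl, rfl⟩ := ih _ hlt h' rfl
    exact ⟨C, k, k + l, rfl, (wpow_add C k l).symm⟩
  · obtain ⟨A', rfl, h'⟩ := exists_eq_append_of_append_comm h.symm hle
    rcases eq_or_ne B [] with rfl | hB
    · exact ⟨A', 1, 0, by simp [wpow], rfl⟩
    have hlt : A'.length + B.length < n := by
      have := length_pos_iff.mpr hB
      simp only [length_append] at hn; omega
    obtain ⟨C, k, l, rfl, rfl⟩ := ih _ hlt h'.symm rfl
    exact ⟨C, l + k, l, (wpow_add C l k).symm, rfl⟩

end List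

open List in
theorem stmt1_general {α : Type*} (A B : List α) (m1 m2 : ℕ)
    (hlen1 : A.length + B.length ≤ (wpow A m1).length)
    (hlen2 : A.length + B.length ≤ (wpow B m2).length)
    (hpre : (wpow A m1).take (A.length + B.length) = (wpow B m2).take (A.length + B.length)) :
    ∃ (C : List α) (k l : ℕ), A = wpow C k ∧ B = wpow C l := by
  have hB : B <+: wpow A m1 :=
    (hpre ▸ prefix_take_wpow (by omega) hlen2).trans (take_prefix _ _)
  have hA : A <+: wpow B m2 :=
    (hpre ▸ prefix_take_wpow (by omega) hlen1).trans (take_prefix _ _)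
  have hBA := take_wpow_eq_append_of_prefix (by omega) hA
  rw [Nat.add_comm B.length] at hBA
  rw [take_wpow_eq_append_of_prefix hlen1 hB, hBA] at hpre
  exact exists_eq_wpow_of_append_comm hpre

theorem stmt1 {α : Type*} (A B : List α) (hA : A ≠ []) (hB : B ≠ []) (m1 m2 : ℕ)
    (hlen1 : A.length + B.length ≤ (wpow A m1).length)
    (hlen2 : A.length + B.length ≤ (wpow B m2).length)
    (hpre : (wpow A m1).take (A.length + B.length) = (wpow B m2).take (A.length + B.length)) :
    ∃ (C : List α) (k l : ℕ), A = wpow C k ∧ B = wpow C l :=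
  stmt1_general A B m1 m2 hlen1 hlen2 hpre
end

section
/- If A and B are nonempty words with A^{m1} = B^{m2} for some positive integers m1, m2, then there exists a word C and integers k, l such that A = C^k and B = C^l. -/
section
variable {α : Type*}

@[simp]
lemma wpow_one (A : List α) : wpow A 1 = A := by
  simp [wpow]

lemma wpow_add (A : List α) (m n : ℕ) : wpow A (m + n) = wpow A m ++ wpow A n := by
  induction m with
  | zero => simp [wpow]
  | succ m ih => rw [Nat.succ_add, wpow, wpow, ih, List.append_assoc]

lemma append_wpow_comm (A : List α) (n : ℕ) : A ++ wpow A n = wpow A n ++ A :=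
  calc A ++ wpow A n = wpow A (n + 1) := rfl
    _ = wpow A n ++ A := by rw [wpow_add, wpow_one]

lemma prefix_wpow (A : List α) {n : ℕ} (hn : 0 < n) : A <+: wpow A n := by
  obtain ⟨k, rfl⟩ := Nat.exists_eq_add_of_lt hn
  exact List.prefix_append A _

lemma append_comm_of_wpow_eq {A B : List α} {m n : ℕ} (hm : 0 < m) (hn : 0 < n)
    (h : wpow A m = wpow B n) : A ++ B = B ++ A := by
  set W := wpow A m
  have hAB : A ++ B <+: W ++ W :=
    calc A ++ B <+: A ++ W := (List.prefix_append_right_inj A).mpr (h ▸ prefix_wpow B hn)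
      _ = W ++ A := append_wpow_comm A m
      _ <+: W ++ W := (List.prefix_append_right_inj W).mpr (prefix_wpow A hm)
  have hBA : B ++ A <+: W ++ W :=
    calc B ++ A <+: B ++ W := (List.prefix_append_right_inj B).mpr (prefix_wpow A hm)
      _ = W ++ B := by rw [h, append_wpow_comm B n]
      _ <+: W ++ W := (List.prefix_append_right_inj W).mpr (h ▸ prefix_wpow B hn)
  have hlen : (A ++ B).length = (B ++ A).length := by simp [Nat.add_comm]
  exact (List.prefix_of_prefix_length_le hAB hBA hlen.le).eq_of_length hlen

theorem exists_eq_wpow_of_append_comm {A B : List α} (h : A ++ B = B ++ A) :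
    ∃ (C : List α) (k l : ℕ), A = wpow C k ∧ B = wpow C l := by
  induction hsize : A.length + B.length using Nat.strong_induction_on generalizing A B with
  | _ s ih =>
    wlog hle : A.length ≤ B.length generalizing A B
    · obtain ⟨C, k, l, hB, hA⟩ := this h.symm (by omega) (by omega)
      exact ⟨C, l, k, hA, hB⟩
    rcases eq_or_ne A [] with rfl | hA
    · exact ⟨B, 0, 1, rfl, (wpow_one B).symm⟩
    obtain ⟨B', rfl⟩ : A <+: B :=
      List.prefix_of_prefix_length_le (h ▸ List.prefix_append A B) (List.prefix_append B A) hle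
    have hcomm : A ++ B' = B' ++ A := by
      simpa only [List.append_assoc, List.append_cancel_left_eq] using h
    have hlt : A.length + B'.length < s := by
      have := List.length_pos_iff.mpr hA
      simp only [List.length_append] at hsize
      omega
    obtain ⟨C, k, l, rfl, rfl⟩ := ih _ hlt hcomm rfl
    exact ⟨C, k, k + l, rfl, (wpow_add C k l).symm⟩

end

theorem stmt2_general {α : Type*} (A B : List α) (m1 m2 : ℕ)
    (hm1 : 0 < m1) (hm2 : 0 < m2) (h : wpow A m1 = wpow B m2) :
    ∃ (C : List α) (k l : ℕ), A = wpow C k ∧ B = wpow C l :=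
  exists_eq_wpow_of_append_comm (append_comm_of_wpow_eq hm1 hm2 h)

theorem stmt2 {α : Type*} (A B : List α) (hA : A ≠ []) (hB : B ≠ []) (m1 m2 : ℕ)
    (hm1 : 0 < m1) (hm2 : 0 < m2) (h : wpow A m1 = wpow B m2) :
    ∃ (C : List α) (k l : ℕ), A = wpow C k ∧ B = wpow C l :=
  stmt2_general A B m1 m2 hm1 hm2 h
end

section
/- Let A be a nonempty word, and let j be the largest integer with j < |A| such that the prefix of A of length j equals the suffix of A of length j (j = 0 allowed). Let k = |A| - j. Then: if k divides |A|, the root of A has length k; otherwise, A is primitive (its root has length |A|). -/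
/-- A word is primitive if it is nonempty and is not a proper power `B^k`, `k ≥ 2`. -/
def Primitive {α : Type*} (A : List α) : Prop :=
  A ≠ [] ∧ ∀ (B : List α) (k : ℕ), 2 ≤ k → A ≠ wpow B k

/-!
Since `j` is the longest border of `A`, `p = |A| - j` is the least period of `A`. The root
length `|B|` is a period of `A = B^n`, so `p ≤ |B|`. If `n = 1`, then `A = B` is primitive, and
a period dividing `|A|` would write `A` as a power of its prefix of that length, so `p = |A|`.
If `n ≥ 2`, then `p + |B| ≤ |A|`, so by the Fine–Wilf periodicity lemma `gcd p |B|` is a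
period of `A`, hence of its prefix `B`; since it divides `|B|`, primitivity forces it to be
`|B|`, and therefore `p = |B|`, which divides `|A|`.
-/

section Words

variable {α : Type*}

lemma length_wpow (B : List α) (n : ℕ) : (wpow B n).length = n * B.length := by
  induction n with
  | zero => simp [wpow]
  | succ n ih => simp [wpow, ih, Nat.succ_mul, Nat.add_comm]

lemma wpow_succ (B : List α) (n : ℕ) : wpow B (n + 1) = wpow B n ++ B := by
  induction n with
  | zero => simp [wpow]
  | succ n ih =>
    show B ++ wpow B (n + 1) = (B ++ wpow B n) ++ B
    rw [ih, List.append_assoc]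

lemma isInfix_wpow {B : List α} {n : ℕ} (hn : n ≠ 0) : B <:+: wpow B n := by
  obtain ⟨m, rfl⟩ := Nat.exists_eq_succ_of_ne_zero hn
  exact (List.prefix_append B (wpow B m)).isInfix

lemma take_sub_length_wpow_eq_drop (B : List α) (n : ℕ) :
    (wpow B n).take ((wpow B n).length - B.length) = (wpow B n).drop B.length := by
  cases n with
  | zero => simp [wpow]
  | succ m =>
    have hlen : (wpow B (m + 1)).length - B.length = (wpow B m).length := by
      simp [length_wpow, Nat.succ_mul]
    rw [hlen]
    nth_rw 1 [wpow_succ]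
    rw [List.take_left, wpow, List.drop_left]

lemma List.hasPeriod_of_take_eq_drop {w : List α} {p : ℕ}
    (h : w.take (w.length - p) = w.drop p) : w.HasPeriod p := by
  unfold List.HasPeriod
  nth_rw 1 [← List.take_append_drop p w]
  exact (List.prefix_append_right_inj _).2 (h ▸ List.take_prefix _ _)

lemma hasPeriod_wpow (B : List α) (n : ℕ) : (wpow B n).HasPeriod B.length :=
  List.hasPeriod_of_take_eq_drop (take_sub_length_wpow_eq_drop B n)

lemma List.HasPeriod.eq_wpow_take {p : ℕ} :
    ∀ {m : ℕ} {w : List α}, w.HasPeriod p → w.length = m * p → w = wpow (w.take p) m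
  | 0, w, _, hlen => by simpa [wpow] using hlen
  | m + 1, w, hw, hlen => by
    have hdrop : (w.drop p).HasPeriod p := hw.infix (List.drop_suffix p w).isInfix
    have ih := hdrop.eq_wpow_take (m := m) (by simp [hlen, Nat.succ_mul])
    suffices wpow ((w.drop p).take p) m = wpow (w.take p) m by
      rw [wpow, ← this, ← ih, List.take_append_drop]
    rcases Nat.eq_zero_or_pos m with rfl | hm
    · rfl
    have hpre : w.drop p = w.take (w.length - p) := by
      simpa using List.prefix_iff_eq_take.1 (hw.drop_prefix p)
    have hp : p ≤ w.length - p := by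
      rw [hlen, Nat.succ_mul, Nat.add_sub_cancel]
      exact Nat.le_mul_of_pos_left p hm
    rw [hpre, List.take_take, Nat.min_eq_left hp]

lemma Primitive.eq_length_of_hasPeriod {B : List α} {p : ℕ} (hB : Primitive B)
    (hp : B.HasPeriod p) (hdvd : p ∣ B.length) : p = B.length := by
  obtain ⟨m, hm⟩ := hdvd
  have hB0 : B.length ≠ 0 := by simpa using hB.1
  obtain rfl | rfl | hm2 : m = 0 ∨ m = 1 ∨ 2 ≤ m := by omega
  · simp_all
  · simp [hm]
  · exact absurd (hp.eq_wpow_take (hm.trans (Nat.mul_comm _ _))) (hB.2 _ m hm2)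

lemma Primitive.length_dvd_of_hasPeriod_wpow {B : List α} {n p : ℕ} (hB : Primitive B)
    (hp : (wpow B n).HasPeriod p) (hlen : p + B.length ≤ (wpow B n).length) :
    B.length ∣ p := by
  have hn : n ≠ 0 := by
    rintro rfl
    simp [wpow] at hlen
    exact hB.1 hlen.2
  have hgcd := (hp.gcd (hasPeriod_wpow B n) (by omega)).infix (isInfix_wpow hn)
  rw [← hB.eq_length_of_hasPeriod hgcd (Nat.gcd_dvd_right _ _)]
  exact Nat.gcd_dvd_left _ _

end Words

theorem stmt5_general {α : Type*} (A : List α) (j : ℕ) (hj : j < A.length)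
    (heq : A.take j = A.drop (A.length - j))
    (hmax : ∀ j', j < j' → j' < A.length → A.take j' ≠ A.drop (A.length - j'))
    (B : List α) (n : ℕ) (hB : Primitive B) (hn : 1 ≤ n) (hpow : A = wpow B n) :
    ((A.length - j) ∣ A.length → B.length = A.length - j) ∧
    (¬ (A.length - j) ∣ A.length → B.length = A.length) := by
  have hlenA : A.length = n * B.length := by rw [hpow, length_wpow]
  have hperiod : A.HasPeriod (A.length - j) :=
    A.hasPeriod_of_take_eq_drop (by rwa [Nat.sub_sub_self hj.le])
  have hB0 : 0 < B.length := List.length_pos_iff.2 hB.1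
  have hBA : B.length ≤ A.length := hlenA ▸ Nat.le_mul_of_pos_left _ hn
  have hle : A.length - j ≤ B.length := by
    by_contra! hlt
    refine hmax (A.length - B.length) (by omega) (by omega) ?_
    rw [Nat.sub_sub_self hBA, hpow]
    exact take_sub_length_wpow_eq_drop B n
  obtain rfl | hn2 : n = 1 ∨ 2 ≤ n := by omega
  · obtain rfl : A = B := by simpa [wpow] using hpow
    exact ⟨fun hdvd => (hB.eq_length_of_hasPeriod hperiod hdvd).symm, fun _ => rfl⟩
  · have hdvd : B.length ∣ A.length - j := by
      rw [hpow] at hperiod ⊢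
      exact hB.length_dvd_of_hasPeriod_wpow hperiod (by rw [← hpow]; nlinarith)
    have hroot : A.length - j = B.length := le_antisymm hle (Nat.le_of_dvd (by omega) hdvd)
    have hdvdA : A.length - j ∣ A.length := hroot ▸ Dvd.intro_left n hlenA.symm
    exact ⟨fun _ => hroot.symm, fun hndvd => (hndvd hdvdA).elim⟩

theorem stmt5 {α : Type*} (A : List α) (hA : A ≠ []) (j : ℕ) (hj : j < A.length)
    (heq : A.take j = A.drop (A.length - j))
    (hmax : ∀ j', j < j' → j' < A.length → A.take j' ≠ A.drop (A.length - j'))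
    (B : List α) (n : ℕ) (hB : Primitive B) (hn : 1 ≤ n) (hpow : A = wpow B n) :
    ((A.length - j) ∣ A.length → B.length = A.length - j) ∧
    (¬ (A.length - j) ∣ A.length → B.length = A.length) :=
  stmt5_general A j hj heq hmax B n hB hn hpow
end

section
/- For nonempty words A and B over a linearly ordered alphabet, R(A) < R(B) in lexicographic order if and only if AB < BA in lexicographic order, where R(X) is the infinite periodic word XXX···. -/
/-- `R A` is the infinite periodic word `AAA⋯`: `R A i = A (i % |A|)`. -/
def R {α : Type*} [Inhabited α] (A : List α) : ℕ → α :=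
  fun i => A.getD (i % A.length) default

/-- Strict lexicographic order on infinite words. -/
def InfLt {α : Type*} [LinearOrder α] (f g : ℕ → α) : Prop :=
  ∃ i, (∀ j < i, f j = g j) ∧ f i < g i

/-- Lexicographic (non-strict) order on infinite words. -/
def InfLe {α : Type*} [LinearOrder α] (f g : ℕ → α) : Prop :=
  f = g ∨ InfLt f g

section aux

variable {α : Type*} [LinearOrder α] [Inhabited α]

lemma R_sub (A : List α) {i : ℕ} (h : A.length ≤ i) : R A i = R A (i - A.length) := by
  unfold R
  rw [Nat.mod_eq_sub_mod h]

lemma R_small {A : List α} {i : ℕ} (h : i < A.length) : R A i = A.getD i default := by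
  unfold R
  rw [Nat.mod_eq_of_lt h]

lemma key1 (A B : List α) (hA : A ≠ []) (hB : B ≠ []) (i : ℕ)
    (hi : i < A.length + B.length) (hag : ∀ j < i, R A j = R B j) :
    (A ++ B).getD i default = R A i := by
  have hm : 0 < A.length := List.length_pos_iff.mpr hA
  have hn : 0 < B.length := List.length_pos_iff.mpr hB
  by_cases h : i < A.length
  · rw [List.getD_append _ _ _ _ h, R_small h]
  · push_neg at h
    have h1 : i - A.length < B.length := by omega
    have h2 : i - A.length < i := by omega
    rw [List.getD_append_right _ _ _ _ h, R_sub A h, hag _ h2, R_small h1]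

lemma ext_of_agree (A B : List α) (hA : A ≠ []) (hB : B ≠ [])
    (hag : ∀ j < A.length + B.length, R A j = R B j) : ∀ i, R A i = R B i := by
  have hm : 0 < A.length := List.length_pos_iff.mpr hA
  have hn : 0 < B.length := List.length_pos_iff.mpr hB
  intro i
  induction i using Nat.strong_induction_on with
  | _ i IH =>
    by_cases h : i < A.length + B.length
    · exact hag i h
    · push_neg at h
      have e : i - A.length - B.length = i - B.length - A.length := by omega
      calc R A i = R A (i - A.length) := R_sub A (by omega)
        _ = R B (i - A.length) := IH _ (by omega)
        _ = R B (i - A.length - B.length) := R_sub B (by omega)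
        _ = R A (i - A.length - B.length) := (IH _ (by omega)).symm
        _ = R A (i - B.length - A.length) := by rw [e]
        _ = R A (i - B.length) := (R_sub A (by omega)).symm
        _ = R B (i - B.length) := IH _ (by omega)
        _ = R B i := (R_sub B (by omega)).symm

lemma lex_iff : ∀ {L M : List α}, L.length = M.length →
    (L < M ↔ ∃ i, i < L.length ∧ (∀ j < i, L.getD j default = M.getD j default) ∧
      L.getD i default < M.getD i default)
  | [], [], _ => by
    constructor
    · intro h; exact absurd h (List.not_lt_nil _)
    · rintro ⟨i, hi, -⟩; simp at hi
  | [], b :: M, h => by simp at h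
  | a :: L, [], h => by simp at h
  | a :: L, b :: M, h => by
    have h' : L.length = M.length := by simpa using h
    constructor
    · intro hlt
      cases hlt with
      | rel hab => exact ⟨0, by simp, by simp, by simpa using hab⟩
      | cons htail =>
        obtain ⟨i, hi, hagr, hl⟩ := (lex_iff h').mp htail
        exact ⟨i + 1, by simpa using hi, by
          intro j hj
          cases j with
          | zero => simp
          | succ j => simpa using hagr j (by omega), by simpa using hl⟩
    · rintro ⟨i, hi, hagr, hl⟩
      cases i with
      | zero =>
        exact List.Lex.rel (by simpa using hl)
      | succ i =>
        have hab : a = b := by simpa using hagr 0 (Nat.succ_pos _)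
        subst hab
        exact List.Lex.cons ((lex_iff h').mpr
          ⟨i, by simpa using hi, fun j hj => by simpa using hagr (j + 1) (by omega),
            by simpa using hl⟩)

end aux

theorem stmt7 {α : Type*} [LinearOrder α] [Inhabited α] (A B : List α)
    (hA : A ≠ []) (hB : B ≠ []) :
    InfLt (R A) (R B) ↔ A ++ B < B ++ A := by
  have hm : 0 < A.length := List.length_pos_iff.mpr hA
  have hn : 0 < B.length := List.length_pos_iff.mpr hB
  have hlen : (A ++ B).length = (B ++ A).length := by simp [Nat.add_comm]
  constructor
  · rintro ⟨i, hag, hlt⟩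
    have hi : i < A.length + B.length := by
      by_contra h
      push_neg at h
      have := ext_of_agree A B hA hB (fun j hj => hag j (lt_of_lt_of_le hj h)) i
      exact absurd this (ne_of_lt hlt)
    rw [lex_iff hlen]
    refine ⟨i, by simpa using hi, ?_, ?_⟩
    · intro j hj
      have hj' : j < A.length + B.length := by omega
      rw [key1 A B hA hB j hj' (fun l hl => hag l (lt_trans hl hj)),
        key1 B A hB hA j (by omega) (fun l hl => (hag l (lt_trans hl hj)).symm)]
      exact hag j hj
    · rw [key1 A B hA hB i hi hag,
        key1 B A hB hA i (by omega) (fun l hl => (hag l hl).symm)]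
      exact hlt
  · intro h
    rw [lex_iff hlen] at h
    obtain ⟨k, hk, hag, hlt⟩ := h
    have hk' : k < A.length + B.length := by simpa using hk
    have hagf : ∀ j, j < k → R A j = R B j := by
      intro j
      induction j using Nat.strong_induction_on with
      | _ j IH =>
        intro hj
        have e1 := key1 A B hA hB j (by omega) (fun l hl => IH l hl (by omega))
        have e2 := key1 B A hB hA j (by omega) (fun l hl => (IH l hl (by omega)).symm)
        rw [← e1, ← e2]
        exact hag j hj
    refine ⟨k, hagf, ?_⟩
    rw [key1 A B hA hB k hk' hagf,
      key1 B A hB hA k (by omega) (fun l hl => (hagf l hl).symm)] at hlt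
    exact hlt
end

section
/- The relation on nonempty words defined by A ≼ B iff AB ≤ BA (lexicographic order) is transitive: if AB ≤ BA and BC ≤ CB then AC ≤ CA. -/
namespace Stmt8Aux

variable {α : Type*} [LinearOrder α]

/-- `pw n X` is `X` repeated `n` times. -/
def pw {β : Type*} : ℕ → List β → List β
  | 0, _ => []
  | n+1, X => X ++ pw n X

lemma pw_length {β : Type*} (n : ℕ) (X : List β) : (pw n X).length = n * X.length := by
  induction n with
  | zero => simp [pw]
  | succ n ih => simp [pw, ih, Nat.succ_mul]; ring

lemma pw_add {β : Type*} (m n : ℕ) (X : List β) :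
    pw (m + n) X = pw m X ++ pw n X := by
  induction m with
  | zero => simp [pw]
  | succ m ih => simp [Nat.succ_add, pw, ih]

lemma pw_mul {β : Type*} (m n : ℕ) (X : List β) :
    pw (m * n) X = pw m (pw n X) := by
  induction m with
  | zero => simp [pw]
  | succ m ih =>
    have : (m + 1) * n = n + m * n := by ring
    rw [this, pw_add, ih]; rfl

/-- Strict appending: if `X < Y` with equal lengths then `X ++ Z < Y ++ W`. -/
lemma lt_append : ∀ {X Y : List α}, X.length = Y.length → X < Y →
    ∀ Z W : List α, X ++ Z < Y ++ W := by
  intro X Y hlen h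
  have h' : List.Lex (· < ·) X Y := h
  clear h
  induction h' with
  | nil => simp at hlen
  | @cons a l₁ l₂ h ih =>
    intro Z W
    exact List.Lex.cons (ih (by simpa using hlen) Z W)
  | rel h => intro Z W; exact List.Lex.rel h

lemma le_append_left {Z W : List α} (h : Z ≤ W) (X : List α) : X ++ Z ≤ X ++ W := by
  rcases lt_or_eq_of_le h with h | rfl
  · exact le_of_lt (List.Lex.append_left _ h X)
  · exact le_rfl

lemma le_append {X Y Z W : List α} (hlen : X.length = Y.length)
    (h1 : X ≤ Y) (h2 : Z ≤ W) : X ++ Z ≤ Y ++ W := by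
  rcases lt_or_eq_of_le h1 with h | rfl
  · exact le_of_lt (lt_append hlen h Z W)
  · exact le_append_left h2 X

/-- weak: `AW ≤ WA` implies `A^m W ≤ W A^m`. -/
lemma pw_left_le {A W : List α} (h : A ++ W ≤ W ++ A) :
    ∀ m, pw m A ++ W ≤ W ++ pw m A := by
  intro m
  induction m with
  | zero => simp [pw]
  | succ m ih =>
    calc pw (m+1) A ++ W = A ++ (pw m A ++ W) := by simp [pw]
      _ ≤ A ++ (W ++ pw m A) := le_append_left ih A
      _ = (A ++ W) ++ pw m A := by simp
      _ ≤ (W ++ A) ++ pw m A := le_append (by simp [Nat.add_comm]) h le_rfl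
      _ = W ++ pw (m+1) A := by simp [pw]

/-- weak: `XW ≤ WX` implies `X W^n ≤ W^n X`. -/
lemma pw_right_le {X W : List α} (h : X ++ W ≤ W ++ X) :
    ∀ n, X ++ pw n W ≤ pw n W ++ X := by
  intro n
  induction n with
  | zero => simp [pw]
  | succ n ih =>
    calc X ++ pw (n+1) W = (X ++ W) ++ pw n W := by simp [pw]
      _ ≤ (W ++ X) ++ pw n W := le_append (by simp [Nat.add_comm]) h le_rfl
      _ = W ++ (X ++ pw n W) := by simp
      _ ≤ W ++ (pw n W ++ X) := le_append_left ih W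
      _ = pw (n+1) W ++ X := by simp [pw]

/-- strict: `AW < WA` implies `A^(m+1) W < W A^(m+1)`. -/
lemma pw_left_lt {A W : List α} (h : A ++ W < W ++ A) (m : ℕ) :
    pw (m+1) A ++ W < W ++ pw (m+1) A := by
  calc pw (m+1) A ++ W = A ++ (pw m A ++ W) := by simp [pw]
    _ ≤ A ++ (W ++ pw m A) := le_append_left (pw_left_le h.le m) A
    _ = (A ++ W) ++ pw m A := by simp
    _ < (W ++ A) ++ pw m A := lt_append (by simp [Nat.add_comm]) h _ _
    _ = W ++ pw (m+1) A := by simp [pw]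

/-- strict: `XW < WX` implies `X W^(n+1) < W^(n+1) X`. -/
lemma pw_right_lt {X W : List α} (h : X ++ W < W ++ X) (n : ℕ) :
    X ++ pw (n+1) W < pw (n+1) W ++ X := by
  calc X ++ pw (n+1) W = (X ++ W) ++ pw n W := by simp [pw]
    _ < (W ++ X) ++ pw n W := lt_append (by simp [Nat.add_comm]) h _ _
    _ = W ++ (X ++ pw n W) := by simp
    _ ≤ W ++ (pw n W ++ X) := le_append_left (pw_right_le h.le n) W
    _ = pw (n+1) W ++ X := by simp [pw]

lemma le_of_append_le {X Y : List α} (hlen : X.length = Y.length)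
    (h : X ++ Y ≤ Y ++ X) : X ≤ Y := by
  by_contra hc
  exact absurd (lt_append hlen.symm (lt_of_not_ge hc) X Y) (not_lt_of_ge h)

lemma lt_of_append_lt {X Y : List α} (hlen : X.length = Y.length)
    (h : X ++ Y < Y ++ X) : X < Y := by
  by_contra hc
  rcases lt_or_eq_of_le (le_of_not_gt hc) with h' | rfl
  · exact absurd (lt_append hlen.symm h' X Y) (not_lt_of_ge h.le)
  · exact lt_irrefl _ h

lemma pw_le_pw {X Y : List α} (hlen : X.length = Y.length) (h : X ≤ Y) (k : ℕ) :
    pw k X ≤ pw k Y := by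
  rcases lt_or_eq_of_le h with h | rfl
  · cases k with
    | zero => simp [pw]
    | succ k => exact le_of_lt (lt_append hlen h _ _)
  · exact le_rfl

lemma pw_lt_pw {X Y : List α} (hlen : X.length = Y.length) (h : X < Y) (k : ℕ) :
    pw (k+1) X < pw (k+1) Y :=
  lt_append hlen h _ _

/-- key: `XY ≤ YX` implies `X^|Y| ≤ Y^|X|`. -/
lemma pw_le_of_rel {X Y : List α} (h : X ++ Y ≤ Y ++ X) :
    pw Y.length X ≤ pw X.length Y := by
  apply le_of_append_le (by simp [pw_length, Nat.mul_comm])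
  have h1 : pw Y.length X ++ Y ≤ Y ++ pw Y.length X := pw_left_le h Y.length
  exact pw_right_le h1 X.length

end Stmt8Aux

open Stmt8Aux in
theorem stmt8 {α : Type*} [LinearOrder α] (A B C : List α)
    (hA : A ≠ []) (hB : B ≠ []) (hC : C ≠ [])
    (h1 : A ++ B ≤ B ++ A) (h2 : B ++ C ≤ C ++ B) :
    A ++ C ≤ C ++ A := by
  set a := A.length with ha
  set b := B.length with hb
  set c := C.length with hc
  have hAB : pw b A ≤ pw a B := pw_le_of_rel h1
  have hBC : pw c B ≤ pw b C := pw_le_of_rel h2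
  have hlAB : (pw b A).length = (pw a B).length := by simp [pw_length, Nat.mul_comm]; rfl
  have hlBC : (pw c B).length = (pw b C).length := by simp [pw_length, Nat.mul_comm]; rfl
  have key : pw (c * b) A ≤ pw (a * b) C := by
    calc pw (c * b) A = pw c (pw b A) := pw_mul c b A
      _ ≤ pw c (pw a B) := pw_le_pw hlAB hAB c
      _ = pw (c * a) B := (pw_mul c a B).symm
      _ = pw (a * c) B := by rw [Nat.mul_comm]
      _ = pw a (pw c B) := pw_mul a c B
      _ ≤ pw a (pw b C) := pw_le_pw hlBC hBC a
      _ = pw (a * b) C := (pw_mul a b C).symm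
  by_contra hcon
  have hlt : C ++ A < A ++ C := lt_of_not_ge hcon
  obtain ⟨a', ha'⟩ : ∃ a', a = a' + 1 := by
    refine ⟨a - 1, ?_⟩
    have : 0 < a := List.length_pos_iff.mpr hA
    omega
  obtain ⟨c', hc'⟩ : ∃ c', c = c' + 1 := by
    refine ⟨c - 1, ?_⟩
    have : 0 < c := List.length_pos_iff.mpr hC
    omega
  obtain ⟨b', hb'⟩ : ∃ b', b = b' + 1 := by
    refine ⟨b - 1, ?_⟩
    have : 0 < b := List.length_pos_iff.mpr hB
    omega
  -- from C ++ A < A ++ C derive pw a C ++ pw c A < pw c A ++ pw a C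
  have s1 : C ++ pw c A < pw c A ++ C := by
    rw [hc']; exact pw_right_lt hlt c'
  have s2 : pw a C ++ pw c A < pw c A ++ pw a C := by
    rw [ha']; exact pw_left_lt s1 a'
  have s3 : pw a C < pw c A :=
    lt_of_append_lt (by simp [pw_length, Nat.mul_comm]; rfl) s2
  have s4 : pw (b * a) C < pw (b * c) A := by
    have := pw_lt_pw (by simp [pw_length, Nat.mul_comm]; rfl : (pw a C).length = (pw c A).length) s3 b'
    rw [← hb'] at this
    calc pw (b * a) C = pw b (pw a C) := pw_mul b a C
      _ < pw b (pw c A) := this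
      _ = pw (b * c) A := (pw_mul b c A).symm
  rw [Nat.mul_comm c b, Nat.mul_comm a b] at key
  exact absurd key (not_le_of_gt s4)
end

section
/- Let A_1, …, A_n be nonempty words with R(A_1) ≤ … ≤ R(A_n). Then for every permutation π, the concatenation A_{π(1)}⋯A_{π(n)} is lexicographically less than or equal to A_n A_{n-1} ⋯ A_1. -/
/-!
Write `uv` for `u ++ v`. If `R u` and `R v` agree below position `j < |uv|`, then
`(uv)[j] = R u j` and `(vu)[j] = R v j`: past `|u|`, the word `uv` reads `v`, which agrees with
`R v` and hence with `R u` shifted by `|u|`. So `uv` and `vu` first differ where `R u` and `R v`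
do, and `R u ≤ R v` gives `uv ≤ vu`. Hence in a list sorted by decreasing `R` every earlier word
`a` and later word `b` satisfy `ba ≤ ab`, so moving a word of the sorted list to the front does not
increase the concatenation; inducting on the first word of an arbitrary rearrangement, its
concatenation is at most the sorted one.
-/

namespace List

variable {α : Type*} [LinearOrder α]

theorem append_le_append_right_of_length_eq {a b : List α} (c : List α) (h : a ≤ b)
    (hlen : a.length = b.length) : a ++ c ≤ b ++ c := by
  obtain hlt | rfl := h.lt_or_eq
  · clear h
    refine le_of_lt ?_
    induction hlt with
    | nil => simp at hlen
    | cons _ ih => exact Lex.cons (ih (by simpa using hlen))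
    | rel hab => exact Lex.rel hab
  · exact le_rfl

theorem append_le_append_left (c : List α) {a b : List α} (h : a ≤ b) : c ++ a ≤ c ++ b := by
  induction c with
  | nil => exact h
  | cons x c ih =>
    obtain h' | h' := ih.lt_or_eq
    · exact le_of_lt (Lex.cons h')
    · rw [cons_append, cons_append, h']

theorem le_of_infLe_of_getElem_eq {l₁ l₂ : List α} {f g : ℕ → α} (hfg : InfLe f g)
    (hlen : l₁.length = l₂.length)
    (h₁ : ∀ j (hj : j < l₁.length), (∀ k < j, f k = g k) → l₁[j] = f j)
    (h₂ : ∀ j (hj : j < l₂.length), (∀ k < j, f k = g k) → l₂[j] = g j) : l₁ ≤ l₂ := by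
  have eq_of_agree (i : ℕ) (hi : ∀ k < i, f k = g k) (hle : l₁.length ≤ i) : l₁ = l₂ := by
    refine ext_getElem hlen fun j hj₁ hj₂ => ?_
    have hagree : ∀ k < j, f k = g k := fun k hk => hi k (by omega)
    rw [h₁ j hj₁ hagree, h₂ j hj₂ hagree, hi j (by omega)]
  obtain rfl | ⟨i, hi, hlt⟩ := hfg
  · exact (eq_of_agree l₁.length (fun _ _ => rfl) le_rfl).le
  by_cases hiN : i < l₁.length
  · refine le_of_lt (List.lt_iff_exists.2 (Or.inr ⟨i, hiN, hlen ▸ hiN, fun j hj => ?_, ?_⟩))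
    · have hagree : ∀ k < j, f k = g k := fun k hk => hi k (by omega)
      rw [h₁ j _ hagree, h₂ j _ hagree, hi j hj]
    · rwa [h₁ i hiN hi, h₂ i _ hi]
  · exact (eq_of_agree i hi (by omega)).le

theorem append_flatten_le_flatten_append {u : List α} {p : List (List α)}
    (h : ∀ w ∈ p, u ++ w ≤ w ++ u) : u ++ p.flatten ≤ p.flatten ++ u := by
  induction p with
  | nil => simp
  | cons w p ih =>
    calc u ++ (w :: p).flatten = u ++ w ++ p.flatten := by simp
      _ ≤ w ++ u ++ p.flatten :=
        append_le_append_right_of_length_eq _ (h w mem_cons_self) (by simp [Nat.add_comm])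
      _ = w ++ (u ++ p.flatten) := by simp
      _ ≤ w ++ (p.flatten ++ u) := append_le_append_left _ (ih fun x hx => h x (mem_cons_of_mem w hx))
      _ = (w :: p).flatten ++ u := by simp

theorem flatten_le_flatten_of_perm_of_pairwise {L M : List (List α)} (hLM : L.Perm M)
    (hM : M.Pairwise fun a b => b ++ a ≤ a ++ b) : L.flatten ≤ M.flatten := by
  induction L generalizing M with
  | nil => rw [hLM.nil_eq]
  | cons u L ih =>
    obtain ⟨p, q, rfl⟩ := append_of_mem (hLM.subset mem_cons_self)
    have hL : L.Perm (p ++ q) := (perm_cons u).1 (hLM.trans perm_middle)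
    have hpq : (p ++ q).Pairwise fun a b => b ++ a ≤ a ++ b :=
      hM.sublist ((sublist_cons_self u q).append_left p)
    have hu : ∀ w ∈ p, u ++ w ≤ w ++ u := fun w hw =>
      (pairwise_append.1 hM).2.2 w hw u mem_cons_self
    calc (u :: L).flatten = u ++ L.flatten := by simp
      _ ≤ u ++ (p ++ q).flatten := append_le_append_left _ (ih hL hpq)
      _ = u ++ p.flatten ++ q.flatten := by simp
      _ ≤ p.flatten ++ u ++ q.flatten :=
        append_le_append_right_of_length_eq _ (append_flatten_le_flatten_append hu)
          (by simp [Nat.add_comm])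
      _ = (p ++ u :: q).flatten := by simp

end List

section PeriodicWord

variable {α : Type*} [Inhabited α]

theorem R_of_lt_length {u : List α} {j : ℕ} (hj : j < u.length) : R u j = u[j] := by
  simp [R, Nat.mod_eq_of_lt hj, hj]

theorem R_of_length_le {u : List α} {j : ℕ} (hj : u.length ≤ j) :
    R u j = R u (j - u.length) := by
  simp only [R, Nat.mod_eq_sub_mod hj]

theorem getElem_append_eq_R {u v : List α} (hu : u ≠ []) {j : ℕ}
    (hj : j < (u ++ v).length) (hagree : ∀ k < j, R u k = R v k) : (u ++ v)[j] = R u j := by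
  have hpos : 0 < u.length := List.length_pos_iff.2 hu
  by_cases hju : j < u.length
  · rw [List.getElem_append_left hju, R_of_lt_length hju]
  · rw [List.length_append] at hj
    rw [List.getElem_append_right (by omega), R_of_length_le (by omega),
      hagree _ (by omega), R_of_lt_length]

theorem append_le_append_comm_of_infLe [LinearOrder α] {u v : List α}
    (h : InfLe (R u) (R v)) : u ++ v ≤ v ++ u := by
  rcases eq_or_ne u [] with rfl | hu
  · simp
  rcases eq_or_ne v [] with rfl | hv
  · simp
  exact List.le_of_infLe_of_getElem_eq h (by simp [Nat.add_comm])
    (fun j hj hagree => getElem_append_eq_R hu hj hagree)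
    (fun j hj hagree => getElem_append_eq_R hv hj fun k hk => (hagree k hk).symm)

end PeriodicWord

theorem stmt11_general {α : Type*} [LinearOrder α] [Inhabited α] (n : ℕ) (A : Fin n → List α)
    (hsorted : ∀ i j : Fin n, i ≤ j → InfLe (R (A i)) (R (A j)))
    (π : Equiv.Perm (Fin n)) :
    (List.ofFn fun i => A (π i)).flatten ≤ (List.ofFn fun i => A i.rev).flatten := by
  refine List.flatten_le_flatten_of_perm_of_pairwise ?_ ?_
  · exact (π.ofFn_comp_perm A).trans (Fin.revPerm.ofFn_comp_perm A).symm
  · refine List.pairwise_ofFn.2 fun i j hij => append_le_append_comm_of_infLe (hsorted _ _ ?_)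
    exact (Fin.rev_lt_rev.2 hij).le

theorem stmt11 {α : Type*} [LinearOrder α] [Inhabited α] (n : ℕ) (A : Fin n → List α)
    (hne : ∀ i, A i ≠ [])
    (hsorted : ∀ i j : Fin n, i ≤ j → InfLe (R (A i)) (R (A j)))
    (π : Equiv.Perm (Fin n)) :
    (List.ofFn fun i => A (π i)).flatten ≤ (List.ofFn fun i => A i.rev).flatten :=
  stmt11_general n A hsorted π
end

section
/- Let A and B be primitive words with |A| ≤ |B| and R(A) ≠ R(B). Write B = A^p S where p = deg_B(A) is the largest integer such that A^p is a prefix of B, and suppose S is a nonempty proper prefix of A with A = ST. Then ST ≠ TS. -/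
/- Two nonempty words commute only if they are powers of a common word (peel the shorter
off the longer one and recurse), so a commuting factorisation `A = S ++ T` exhibits `A` as a
proper power. -/

section

variable {α : Type*}

lemma exists_eq_append_of_append_comm {S T : List α} (hc : S ++ T = T ++ S)
    (hle : S.length ≤ T.length) : ∃ T', T = S ++ T' ∧ S ++ T' = T' ++ S := by
  obtain ⟨T', rfl⟩ : S <+: T :=
    List.prefix_of_prefix_length_le (hc ▸ List.prefix_append S T) (List.prefix_append _ _) hle
  refine ⟨T', rfl, List.append_cancel_left (as := S) ?_⟩
  simpa only [List.append_assoc] using hc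

lemma exists_wpow_of_append_comm {S T : List α} (hc : S ++ T = T ++ S) :
    ∃ w m k, S = wpow w m ∧ T = wpow w k := by
  rcases eq_or_ne S [] with rfl | hS
  · exact ⟨T, 0, 1, rfl, by simp [wpow]⟩
  rcases eq_or_ne T [] with rfl | hT
  · exact ⟨S, 1, 0, by simp [wpow], rfl⟩
  rcases le_or_gt S.length T.length with hle | hlt
  · obtain ⟨T', rfl, hc'⟩ := exists_eq_append_of_append_comm hc hle
    have : T'.length < (S ++ T').length := by simpa using List.length_pos_iff.mpr hS
    obtain ⟨w, m, k, rfl, rfl⟩ := exists_wpow_of_append_comm hc'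
    exact ⟨w, m, m + k, rfl, (wpow_add w m k).symm⟩
  · obtain ⟨S', rfl, hc'⟩ := exists_eq_append_of_append_comm hc.symm hlt.le
    have : S'.length < (T ++ S').length := by simpa using List.length_pos_iff.mpr hT
    obtain ⟨w, k, m, rfl, rfl⟩ := exists_wpow_of_append_comm hc'.symm
    exact ⟨w, m + k, m, (wpow_add w m k).symm, rfl⟩
termination_by S.length + T.length

lemma ne_zero_of_wpow_ne_nil {w : List α} {m : ℕ} (h : wpow w m ≠ []) : m ≠ 0 := by
  rintro rfl
  exact h rfl

end

theorem stmt13_general {α : Type*} (A S T : List α)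
    (hA : Primitive A)
    (hS : S ≠ []) (hT : T ≠ []) (hAdecomp : A = S ++ T) :
    S ++ T ≠ T ++ S := by
  intro hc
  obtain ⟨w, m, k, rfl, rfl⟩ := exists_wpow_of_append_comm hc
  have hm := ne_zero_of_wpow_ne_nil hS
  have hk := ne_zero_of_wpow_ne_nil hT
  exact hA.2 w (m + k) (by omega) (by rw [hAdecomp, wpow_add])

theorem stmt13 {α : Type*} [LinearOrder α] [Inhabited α] (A B S T : List α) (p : ℕ)
    (hA : Primitive A) (hB : Primitive B) (hlen : A.length ≤ B.length)
    (hRne : R A ≠ R B)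
    (hdeg : (wpow A p) <+: B ∧ ¬ (wpow A (p + 1)) <+: B)
    (hBdecomp : B = wpow A p ++ S)
    (hS : S ≠ []) (hT : T ≠ []) (hAdecomp : A = S ++ T) :
    S ++ T ≠ T ++ S :=
  stmt13_general A S T hA hS hT hAdecomp
end

section
/- If B is a Lyndon word and B = AC with A, C nonempty, then AB < BA in lexicographic order (as words of equal length). -/
/-- A Lyndon word is strictly smaller than each of its proper nontrivial rotations. -/
def Lyndon {α : Type*} [LinearOrder α] (W : List α) : Prop :=
  W ≠ [] ∧ ∀ U V : List α, U ≠ [] → V ≠ [] → W = U ++ V → W < V ++ U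

theorem stmt18 {α : Type*} [LinearOrder α] (A B C : List α)
    (hB : Lyndon B) (hA : A ≠ []) (hC : C ≠ []) (hdecomp : B = A ++ C) :
    A ++ B < B ++ A := by
  have hrot : B < C ++ A := hB.2 A C hA hC hdecomp
  calc A ++ B < A ++ (C ++ A) := List.append_left_lt hrot
    _ = B ++ A := by rw [hdecomp, List.append_assoc]
end
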